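/- arXiv:2012.01561 — 4 statements merged into one kernel-verified Lean document; each statement's English description precedes it below -/
import Mathlib

section
/- Let d : M × M → M be a bilinear map. Then for all a, b, c ∈ M one has (1/2)[d,d]_l(a,b,c) = d(d(a,b), β(c)) + d(β(b), d(a,c)) − d(β(a), d(b,c)). Consequently, if d is a 2-β-cochain, then [d,d]_l = 0 if and only if (M, d, β) is a left Hom-Leibniz algebra. -/
open Finset

section NRPreamble

variable {M : Type*} [AddCommGroup M]

/-- The `(p,·)`-unshuffles: permutations strictly increasing on the first `p`
positions and on the remaining positions. -/
def IsUnshuffle {N : ℕ} (p : ℕ) (σ : Equiv.Perm (Fin N)) : Prop :=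
  (∀ i j : Fin N, i < j → (j : ℕ) < p → σ i < σ j) ∧
  (∀ i j : Fin N, i < j → p ≤ (i : ℕ) → σ i < σ j)

instance {N p : ℕ} : DecidablePred (IsUnshuffle (N := N) p) := fun _ => by
  unfold IsUnshuffle; infer_instance

/-- Insertion position (0-indexed, i.e. `l(σ) - 1`) for the left circle product:
the number of second-block values below the image of the last first-block position. -/
def insPosL {m n N : ℕ} (h : m + n = N + 1 ∧ 1 ≤ m ∧ 1 ≤ n) (σ : Equiv.Perm (Fin N)) :
    Fin m :=
  ⟨(univ.filter (fun s : Fin (m - 1) =>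
      σ ⟨n + (s : ℕ), by omega⟩ < σ ⟨n - 1, by omega⟩)).card, by
    have hc := Finset.card_filter_le (univ : Finset (Fin (m - 1)))
      (fun s : Fin (m - 1) => σ ⟨n + (s : ℕ), by omega⟩ < σ ⟨n - 1, by omega⟩)
    simp only [Finset.card_univ, Fintype.card_fin] at hc
    omega⟩

/-- Insertion position (0-indexed, i.e. `r(σ) - 1`) for the right circle product:
the number of second-block values below the image of the first position. -/
def insPosR {m n N : ℕ} (h : m + n = N + 1 ∧ 1 ≤ m ∧ 1 ≤ n) (σ : Equiv.Perm (Fin N)) :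
    Fin m :=
  ⟨(univ.filter (fun s : Fin (m - 1) =>
      σ ⟨n + (s : ℕ), by omega⟩ < σ ⟨0, by omega⟩)).card, by
    have hc := Finset.card_filter_le (univ : Finset (Fin (m - 1)))
      (fun s : Fin (m - 1) => σ ⟨n + (s : ℕ), by omega⟩ < σ ⟨0, by omega⟩)
    simp only [Finset.card_univ, Fintype.card_fin] at hc
    omega⟩

/-- The left circle product `f ∘ₗ g`, realized as an `N`-ary map (it vanishes by
convention unless `m + n = N + 1` with `m, n ≥ 1`). -/
noncomputable def circL (β : M → M) {m n : ℕ}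
    (f : (Fin m → M) → M) (g : (Fin n → M) → M) (N : ℕ) : (Fin N → M) → M :=
  fun a =>
    if h : m + n = N + 1 ∧ 1 ≤ m ∧ 1 ≤ n then
      ∑ σ ∈ univ.filter (IsUnshuffle (N := N) n),
        (have hb : ((insPosL h σ : ℕ)) < m := (insPosL h σ).isLt
        ((-1 : ℤ) ^ ((insPosL h σ : ℕ)) * ((Equiv.Perm.sign σ : ℤˣ) : ℤ)) •
          f (fun j : Fin m =>
            if hj : (j : ℕ) < ((insPosL h σ : ℕ)) then
              β^[n - 1] (a (σ ⟨n + (j : ℕ), by omega⟩))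
            else if hj' : (j : ℕ) = ((insPosL h σ : ℕ)) then
              g (fun t : Fin n => a (σ ⟨(t : ℕ), by omega⟩))
            else
              β^[n - 1] (a (σ ⟨n + (j : ℕ) - 1, by omega⟩))))
    else 0

/-- The right circle product `f ∘ᵣ g`. -/
noncomputable def circR (β : M → M) {m n : ℕ}
    (f : (Fin m → M) → M) (g : (Fin n → M) → M) (N : ℕ) : (Fin N → M) → M :=
  fun a =>
    if h : m + n = N + 1 ∧ 1 ≤ m ∧ 1 ≤ n then
      ∑ σ ∈ univ.filter (IsUnshuffle (N := N) n),
        (have hb : ((insPosR h σ : ℕ)) < m := (insPosR h σ).isLt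
        ((-1 : ℤ) ^ ((insPosR h σ : ℕ)) * ((Equiv.Perm.sign σ : ℤˣ) : ℤ)) •
          f (fun j : Fin m =>
            if hj : (j : ℕ) < ((insPosR h σ : ℕ)) then
              β^[n - 1] (a (σ ⟨n + (j : ℕ), by omega⟩))
            else if hj' : (j : ℕ) = ((insPosR h σ : ℕ)) then
              g (fun t : Fin n => a (σ ⟨(t : ℕ), by omega⟩))
            else
              β^[n - 1] (a (σ ⟨n + (j : ℕ) - 1, by omega⟩))))
    else 0

/-- The circle product for Hom-Lie algebras: `g` is always inserted in the first slot. -/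
noncomputable def circLie (β : M → M) {m n : ℕ}
    (f : (Fin m → M) → M) (g : (Fin n → M) → M) (N : ℕ) : (Fin N → M) → M :=
  fun a =>
    if h : m + n = N + 1 ∧ 1 ≤ m ∧ 1 ≤ n then
      - ∑ σ ∈ univ.filter (IsUnshuffle (N := N) n),
          (((Equiv.Perm.sign σ : ℤˣ) : ℤ)) •
            f (fun j : Fin m =>
              if hj : (j : ℕ) = 0 then g (fun t : Fin n => a (σ ⟨(t : ℕ), by omega⟩))
              else β^[n - 1] (a (σ ⟨n + (j : ℕ) - 1, by omega⟩)))
    else 0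

/-- The left `β`-Nijenhuis–Richardson bracket. -/
noncomputable def bracketL (β : M → M) {m n : ℕ}
    (f : (Fin m → M) → M) (g : (Fin n → M) → M) (N : ℕ) : (Fin N → M) → M :=
  fun a => circL β f g N a - ((-1 : ℤ) ^ ((m - 1) * (n - 1))) • circL β g f N a

/-- The right `β`-Nijenhuis–Richardson bracket. -/
noncomputable def bracketR (β : M → M) {m n : ℕ}
    (f : (Fin m → M) → M) (g : (Fin n → M) → M) (N : ℕ) : (Fin N → M) → M :=
  fun a => circR β f g N a - ((-1 : ℤ) ^ ((m - 1) * (n - 1))) • circR β g f N a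

/-- The `β`-Nijenhuis–Richardson bracket for Hom-Lie algebras. -/
noncomputable def bracketLie (β : M → M) {m n : ℕ}
    (f : (Fin m → M) → M) (g : (Fin n → M) → M) (N : ℕ) : (Fin N → M) → M :=
  fun a => circLie β f g N a - ((-1 : ℤ) ^ ((m - 1) * (n - 1))) • circLie β g f N a

/-- `f` commutes with the twisting map `β` (the `k`-β-cochain condition). -/
def IsBetaCochain (β : M → M) {k : ℕ} (f : (Fin k → M) → M) : Prop :=
  ∀ a : Fin k → M, β (f a) = f (fun i => β (a i))

/-- `f` is a `k`-`β`-cochain: a `k`-linear map commuting with `β`. -/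
def IsCochain (K : Type*) [Field K] {M : Type*} [AddCommGroup M] [Module K M]
    (β : M → M) {k : ℕ} (f : (Fin k → M) → M) : Prop :=
  (∃ F : MultilinearMap K (fun _ : Fin k => M) M, ⇑F = f) ∧ IsBetaCochain β f

/-- View a binary map as a `2`-ary map. -/
def fn2 {A : Type*} (d : A → A → A) : (Fin 2 → A) → A := fun a => d (a 0) (a 1)

/-- Left Hom-Leibniz identity. -/
def IsLeftHomLeibniz {A : Type*} [AddCommGroup A] (β : A → A) (d : A → A → A) : Prop :=
  ∀ x y z : A, d (β x) (d y z) = d (d x y) (β z) + d (β y) (d x z)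

/-- Right Hom-Leibniz identity. -/
def IsRightHomLeibniz {A : Type*} [AddCommGroup A] (β : A → A) (d : A → A → A) : Prop :=
  ∀ x y z : A, d (β x) (d y z) = d (d x y) (β z) - d (d x z) (β y)

/-- Alternating `k`-ary map. -/
def IsAlt {k : ℕ} (f : (Fin k → M) → M) : Prop :=
  ∀ a : Fin k → M, ∀ i j : Fin k, i ≠ j → a i = a j → f a = 0

/-- Insert the value `x` in slot `i` of an `m`-tuple whose remaining entries are
given (in order) by `b`. -/
def insSlot {m : ℕ} (i : Fin m) (x : M) (b : Fin (m - 1) → M) : Fin m → M :=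
  fun p => if hp : (p : ℕ) < (i : ℕ) then b ⟨(p : ℕ), by omega⟩
    else if hpe : (p : ℕ) = (i : ℕ) then x
    else b ⟨(p : ℕ) - 1, by omega⟩

/-- The pair `(f, g)` is an `(m,n)`-`β`-cochain. -/
def IsPairCochain (K : Type*) [Field K] {M : Type*} [AddCommGroup M] [Module K M]
    (β : M → M) {m n : ℕ} (f : (Fin m → M) → M) (g : (Fin n → M) → M) : Prop :=
  IsCochain K β f ∧ IsCochain K β g ∧
  ∀ i j : Fin m, i < j → ∀ (b : Fin (m - 1) → M) (c : Fin n → M),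
    f (insSlot i (g c) b) = - f (insSlot j (g c) b)

end NRPreamble


section AuxNR
open Finset
variable {M : Type*} [AddCommGroup M]

lemma unshuffle32 : univ.filter (IsUnshuffle (N := 3) 2) =
    {(1 : Equiv.Perm (Fin 3)), Equiv.swap 1 2, finRotate 3} := by decide

lemma circL22 (β : M → M) (D : M → M → M) (a : Fin 3 → M) :
    circL β (fn2 D) (fn2 D) 3 a
      = D (D (a 0) (a 1)) (β (a 2)) + D (β (a 1)) (D (a 0) (a 2))
        - D (β (a 0)) (D (a 1) (a 2)) := by
  have h : (2:ℕ) + 2 = 3 + 1 ∧ 1 ≤ 2 ∧ 1 ≤ 2 := by omega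
  show (if h : (2:ℕ) + 2 = 3 + 1 ∧ 1 ≤ 2 ∧ 1 ≤ 2 then _ else 0) = _
  rw [dif_pos h, unshuffle32, Finset.sum_insert (by decide),
    Finset.sum_insert (by decide), Finset.sum_singleton]
  have e1 : (insPosL h (1 : Equiv.Perm (Fin 3)) : ℕ) = 0 := rfl
  have e2 : (insPosL h (Equiv.swap (1:Fin 3) 2) : ℕ) = 1 := rfl
  have e3 : (insPosL h (finRotate 3) : ℕ) = 1 := rfl
  have s1 : ((Equiv.Perm.sign (1 : Equiv.Perm (Fin 3)) : ℤˣ) : ℤ) = 1 := by decide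
  have s2 : ((Equiv.Perm.sign (Equiv.swap (1:Fin 3) 2) : ℤˣ) : ℤ) = -1 := by decide
  have s3 : ((Equiv.Perm.sign (finRotate 3) : ℤˣ) : ℤ) = 1 := by decide
  simp only [e1, e2, e3, s1, s2, s3, fn2]
  norm_num
  show D (D (a 0) (a 1)) (β (a 2)) + (D (β (a 1)) (D (a 0) (a 2)) + -D (β (a 0)) (D (a 1) (a 2))) = _
  abel

lemma bracketL22 (β : M → M) (D : M → M → M) (a : Fin 3 → M) :
    bracketL β (fn2 D) (fn2 D) 3 a
      = (2 : ℤ) • (D (D (a 0) (a 1)) (β (a 2)) + D (β (a 1)) (D (a 0) (a 2))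
        - D (β (a 0)) (D (a 1) (a 2))) := by
  have := circL22 β D a
  simp only [bracketL, this]
  norm_num
  abel

end AuxNR

/-- the value of `(1/2)[d,d]_l` on `(a,b,c)`, and the characterization of
left Hom-Leibniz algebras via the left β-Nijenhuis–Richardson bracket. -/
theorem statement_0 {K : Type*} [Field K] {M : Type*} [AddCommGroup M] [Module K M]
    (h2 : (2 : K) ≠ 0) (β : M →ₗ[K] M) (d : M →ₗ[K] M →ₗ[K] M) :
    (∀ a b c : M,
      (2 : K)⁻¹ •
          bracketL (⇑β) (fn2 (fun x y => d x y)) (fn2 (fun x y => d x y)) 3 ![a, b, c]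
        = d (d a b) (β c) + d (β b) (d a c) - d (β a) (d b c)) ∧
    (IsBetaCochain (⇑β) (fn2 (fun x y => d x y)) →
      (bracketL (⇑β) (fn2 (fun x y => d x y)) (fn2 (fun x y => d x y)) 3 = 0 ↔
        IsLeftHomLeibniz (⇑β) (fun x y => d x y))) := by
  set D : M → M → M := fun x y => d x y with hD
  have key : ∀ a : Fin 3 → M,
      bracketL (⇑β) (fn2 D) (fn2 D) 3 a
        = (2 : K) • (D (D (a 0) (a 1)) (β (a 2)) + D (β (a 1)) (D (a 0) (a 2))
          - D (β (a 0)) (D (a 1) (a 2))) := by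
    intro a
    rw [bracketL22, two_zsmul, two_smul]
  constructor
  · intro a b c
    rw [key ![a, b, c]]
    rw [inv_smul_smul₀ h2]
    simp [D]
  · intro _
    constructor
    · intro hz x y z
      have := congrFun hz ![x, y, z]
      rw [key ![x, y, z]] at this
      simp only [Pi.zero_apply, smul_eq_zero] at this
      rcases this with h | h
      · exact absurd h h2
      · simp only [Matrix.cons_val_zero, Matrix.cons_val_one, Matrix.head_cons,
          Matrix.cons_val_two, Matrix.tail_cons, sub_eq_zero] at h
        exact h.symm
    · intro hl
      funext a
      rw [key a]
      have := hl (a 0) (a 1) (a 2)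
      rw [Pi.zero_apply]
      rw [sub_eq_zero.mpr this.symm, smul_zero]
end

section
/- Let (M, d, β) be a Hom-Lie algebra with d a 2-β-cochain. Then [d,d]_l = 0. -/
open Finset

/-- a Hom-Lie algebra `(M,d,β)` with `d` a 2-β-cochain satisfies
`[d,d]_l = 0`. -/
theorem statement_10 {K : Type*} [Field K] {M : Type*} [AddCommGroup M] [Module K M]
    (β : M →ₗ[K] M) (d : M →ₗ[K] M →ₗ[K] M)
    (hd : IsBetaCochain (⇑β) (fn2 (fun x y => d x y)))
    (hskew : ∀ x y : M, d x y = - d y x)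
    (hjac : ∀ x y z : M, d (β x) (d y z) + d (β y) (d z x) + d (β z) (d x y) = 0) :
    bracketL (⇑β) (fn2 (fun x y => d x y)) (fn2 (fun x y => d x y)) 3 = 0 := by
  have h3 : (2:ℕ) + 2 = 3 + 1 ∧ 1 ≤ 2 ∧ 1 ≤ 2 := ⟨rfl, one_le_two, one_le_two⟩
  have hset : (univ.filter (IsUnshuffle (N:=3) 2)) =
      {Equiv.refl (Fin 3), Equiv.swap 1 2, finRotate 3} := by decide
  have hzero : circL (⇑β) (fn2 (fun x y => d x y)) (fn2 (fun x y => d x y)) 3 = 0 := by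
    funext a
    unfold circL
    rw [dif_pos h3, hset,
      Finset.sum_insert (by decide), Finset.sum_insert (by decide), Finset.sum_singleton]
    show ((1:ℤ) • d (d (a 0) (a 1)) (β (a 2))) +
        ((1:ℤ) • d (β (a 1)) (d (a 0) (a 2)) + (-1:ℤ) • d (β (a 0)) (d (a 1) (a 2))) = 0
    simp only [one_smul, neg_smul]
    have hj := hjac (a 0) (a 1) (a 2)
    have key : d (d (a 0) (a 1)) (β (a 2)) +
        (d (β (a 1)) (d (a 0) (a 2)) + -(d (β (a 0)) (d (a 1) (a 2))))
        = -(d (β (a 0)) (d (a 1) (a 2)) + d (β (a 1)) (d (a 2) (a 0))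
            + d (β (a 2)) (d (a 0) (a 1))) := by
      rw [hskew (d (a 0) (a 1)) (β (a 2)),
        show (d (a 0)) (a 2) = -((d (a 2)) (a 0)) from hskew _ _, map_neg]
      abel
    rw [key, hj, neg_zero]
  funext a
  simp [bracketL, hzero]
end

section
/- Let (M, d_0, β) be a left Hom-Leibniz algebra with d_0 a 2-β-cochain, and let d_0, d_1, …, d_{k−1} be 2-β-cochains (k ≥ 2) such that Σ_{i=0}^{s} [d_i, d_{s−i}]_l = 0 for all 0 ≤ s ≤ k−1 (a deformation of order k−1). Set Ψ = Σ_{i=1}^{k−1} [d_i, d_{k−i}]_l. Then Ψ is a 3-cocycle, i.e. [d_0, Ψ]_l = 0, and the deformation extends to a deformation of order k — that is, there exists a 2-β-cochain d_k with Σ_{i=0}^{k} [d_i, d_{k−i}]_l = 0 — if and only if Ψ is a 3-coboundary, i.e. Ψ = [d_0, g]_l for some 2-β-cochain g. -/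
open Finset

/-!
On binary maps the left bracket is symmetric, `[f, g]_l = f ∘ g + g ∘ f`, and for β-compatible
maps the circle product satisfies the pre-Lie identity
`(f ∘ g) ∘ h + (f ∘ h) ∘ g = f ∘ (g ∘ h) + f ∘ (h ∘ g)`.
Put `eᵢ = dᵢ` for `i < k` and `e_k = 0`, so that `Ψ = ∑_{i+j=k} [eᵢ, eⱼ]_l`. As the lower
coefficients `Ψₛ = ∑_{i+j=s} [eᵢ, eⱼ]_l` vanish for `s < k`, the bracket `[e₀, Ψ]_l` equals
`∑_{p+t=k} eₚ ∘ Ψₜ − ∑_{s+r=k} Ψₛ ∘ e_r`; expanded over `p + q + r = k`, the two sums agree term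
by term by the pre-Lie identity.
The equation of order `k` reads `2 [d₀, d_k]_l + Ψ = 0`, so `g = −2 d_k` and `d_k = −g/2`
translate between extensions and primitives of `Ψ`; in characteristic 2 both sides hold with
`0`, because `Ψ = 2 ∑ eᵢ ∘ eⱼ` vanishes.
-/

open Equiv

section CircleFormulas

variable {M : Type*} [AddCommGroup M] (β : M → M)

theorem circL_fn2_fn2 (f g : M → M → M) :
    circL β (fn2 f) (fn2 g) 3 = fun a =>
      f (g (a 0) (a 1)) (β (a 2)) + f (β (a 1)) (g (a 0) (a 2)) - f (β (a 0)) (g (a 1) (a 2)) := by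
  funext a
  have h : 2 + 2 = 3 + 1 ∧ 1 ≤ 2 ∧ 1 ≤ 2 := by omega
  rw [circL, dif_pos h, show univ.filter (IsUnshuffle (N := 3) 2) =
      {Equiv.refl (Fin 3), swap 1 2, finRotate 3} by decide,
    sum_insert (by decide), sum_insert (by decide), sum_singleton]
  have pos1 : (insPosL h (Equiv.refl (Fin 3)) : ℕ) = 0 := rfl
  have pos2 : (insPosL h (swap 1 2) : ℕ) = 1 := rfl
  have pos3 : (insPosL h (finRotate 3) : ℕ) = 1 := rfl
  have sign2 : ((Perm.sign (swap (1 : Fin 3) 2) : ℤˣ) : ℤ) = -1 := by decide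
  have sign3 : ((Perm.sign (finRotate 3) : ℤˣ) : ℤ) = 1 := by decide
  simp only [fn2, pos1, pos2, pos3, sign2, sign3, Fin.val_zero, Fin.val_one]
  norm_num [show swap (1 : Fin 3) 2 2 = 1 by decide, show swap (1 : Fin 3) 2 0 = 0 by decide,
    show (2 : Fin 3) + 1 = 0 by decide]
  abel

theorem circL_fn2_ternary (f : M → M → M) (T : (Fin 3 → M) → M) :
    circL β (fn2 f) T 4 = fun a =>
      f (T ![a 0, a 1, a 2]) (β (β (a 3))) + f (β (β (a 2))) (T ![a 0, a 1, a 3])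
        - f (β (β (a 1))) (T ![a 0, a 2, a 3]) + f (β (β (a 0))) (T ![a 1, a 2, a 3]) := by
  funext a
  have h : 2 + 3 = 4 + 1 ∧ 1 ≤ 2 ∧ 1 ≤ 3 := by omega
  rw [circL, dif_pos h, show univ.filter (IsUnshuffle (N := 4) 3) =
      {Equiv.refl (Fin 4), swap 2 3, swap 1 2 * swap 2 3, finRotate 4} by decide,
    sum_insert (by decide), sum_insert (by decide), sum_insert (by decide), sum_singleton]
  have pos1 : (insPosL h (Equiv.refl (Fin 4)) : ℕ) = 0 := rfl
  have pos2 : (insPosL h (swap 2 3) : ℕ) = 1 := rfl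
  have pos3 : (insPosL h (swap 1 2 * swap 2 3) : ℕ) = 1 := rfl
  have pos4 : (insPosL h (finRotate 4) : ℕ) = 1 := rfl
  have sign2 : ((Perm.sign (swap (2 : Fin 4) 3) : ℤˣ) : ℤ) = -1 := by decide
  have sign3 : ((Perm.sign (swap (1 : Fin 4) 2 * swap 2 3) : ℤˣ) : ℤ) = 1 := by decide
  have sign4 : ((Perm.sign (finRotate 4) : ℤˣ) : ℤ) = -1 := by decide
  have args1 : ∀ p : ∀ t : Fin 3, (t : ℕ) < 4,
      (fun t : Fin 3 => a ⟨t, p t⟩) = ![a 0, a 1, a 2] := by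
    intro p; funext t; fin_cases t <;> rfl
  have args2 : ∀ p : ∀ t : Fin 3, (t : ℕ) < 4,
      (fun t : Fin 3 => a (swap (2 : Fin 4) 3 ⟨t, p t⟩)) = ![a 0, a 1, a 3] := by
    intro p; funext t; fin_cases t <;> rfl
  have args3 : ∀ p : ∀ t : Fin 3, (t : ℕ) < 4,
      (fun t : Fin 3 => a (swap (1 : Fin 4) 2 (swap (2 : Fin 4) 3 ⟨t, p t⟩))) =
        ![a 0, a 2, a 3] := by
    intro p; funext t; fin_cases t <;> rfl
  have args4 : ∀ p : ∀ t : Fin 3, (t : ℕ) < 4,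
      (fun t : Fin 3 => a (⟨t, p t⟩ + 1)) = ![a 1, a 2, a 3] := by
    intro p; funext t; fin_cases t <;> rfl
  simp only [fn2, pos1, pos2, pos3, pos4, sign2, sign3, sign4, Fin.val_zero, Fin.val_one]
  norm_num [args1, args2, args3, args4]
  simp only [show ∀ p : 3 < 4, (⟨3, p⟩ : Fin 4) = 3 from fun _ => rfl,
    show swap (2 : Fin 4) 3 3 = 2 by decide, show swap (1 : Fin 4) 2 2 = 1 by decide,
    show (3 : Fin 4) + 1 = 0 by decide]
  abel

theorem circL_ternary_fn2 (T : (Fin 3 → M) → M) (f : M → M → M) :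
    circL β T (fn2 f) 4 = fun a =>
      T ![f (a 0) (a 1), β (a 2), β (a 3)] + T ![β (a 1), f (a 0) (a 2), β (a 3)]
        + T ![β (a 1), β (a 2), f (a 0) (a 3)] - T ![β (a 0), f (a 1) (a 2), β (a 3)]
        - T ![β (a 0), β (a 2), f (a 1) (a 3)] + T ![β (a 0), β (a 1), f (a 2) (a 3)] := by
  funext a
  have h : 3 + 2 = 4 + 1 ∧ 1 ≤ 3 ∧ 1 ≤ 2 := by omega
  rw [circL, dif_pos h, show univ.filter (IsUnshuffle (N := 4) 2) =
      {Equiv.refl (Fin 4), swap 1 2, swap 1 3 * swap 2 3,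
       swap 0 1 * swap 1 2, swap 0 1 * swap 1 3 * swap 2 3, swap 0 2 * swap 1 3} by decide,
    sum_insert (by decide), sum_insert (by decide), sum_insert (by decide),
    sum_insert (by decide), sum_insert (by decide), sum_singleton]
  have args : ∀ (σ : Perm (Fin 4)) (v : Fin 3 → M), (∀ j : Fin 3,
      (if hj : (j : ℕ) < insPosL h σ then β^[2 - 1] (a (σ ⟨2 + j, by omega⟩))
        else if hj' : (j : ℕ) = insPosL h σ then fn2 f (fun t : Fin 2 => a (σ ⟨t, by omega⟩))
        else β^[2 - 1] (a (σ ⟨2 + j - 1, by omega⟩))) = v j) →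
      (fun j : Fin 3 =>
        if hj : (j : ℕ) < insPosL h σ then β^[2 - 1] (a (σ ⟨2 + j, by omega⟩))
        else if hj' : (j : ℕ) = insPosL h σ then fn2 f (fun t : Fin 2 => a (σ ⟨t, by omega⟩))
        else β^[2 - 1] (a (σ ⟨2 + j - 1, by omega⟩))) = v :=
    fun σ v hv => funext hv
  simp only [args (Equiv.refl _) ![f (a 0) (a 1), β (a 2), β (a 3)]
      (by intro j; fin_cases j <;> rfl),
    args (swap 1 2) ![β (a 1), f (a 0) (a 2), β (a 3)] (by intro j; fin_cases j <;> rfl),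
    args (swap 1 3 * swap 2 3) ![β (a 1), β (a 2), f (a 0) (a 3)]
      (by intro j; fin_cases j <;> rfl),
    args (swap 0 1 * swap 1 2) ![β (a 0), f (a 1) (a 2), β (a 3)]
      (by intro j; fin_cases j <;> rfl),
    args (swap 0 1 * swap 1 3 * swap 2 3) ![β (a 0), β (a 2), f (a 1) (a 3)]
      (by intro j; fin_cases j <;> rfl),
    args (swap 0 2 * swap 1 3) ![β (a 0), β (a 1), f (a 2) (a 3)]
      (by intro j; fin_cases j <;> rfl)]
  have pos1 : (insPosL h (Equiv.refl (Fin 4)) : ℕ) = 0 := rfl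
  have pos2 : (insPosL h (swap 1 2) : ℕ) = 1 := rfl
  have pos3 : (insPosL h (swap 1 3 * swap 2 3) : ℕ) = 2 := rfl
  have pos4 : (insPosL h (swap 0 1 * swap 1 2) : ℕ) = 1 := rfl
  have pos5 : (insPosL h (swap 0 1 * swap 1 3 * swap 2 3) : ℕ) = 2 := rfl
  have pos6 : (insPosL h (swap 0 2 * swap 1 3) : ℕ) = 2 := rfl
  have sign2 : ((Perm.sign (swap (1 : Fin 4) 2) : ℤˣ) : ℤ) = -1 := by decide
  have sign3 : ((Perm.sign (swap (1 : Fin 4) 3 * swap 2 3) : ℤˣ) : ℤ) = 1 := by decide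
  have sign4 : ((Perm.sign (swap (0 : Fin 4) 1 * swap 1 2) : ℤˣ) : ℤ) = 1 := by decide
  have sign5 : ((Perm.sign (swap (0 : Fin 4) 1 * swap 1 3 * swap 2 3) : ℤˣ) : ℤ) = -1 := by
    decide
  have sign6 : ((Perm.sign (swap (0 : Fin 4) 2 * swap 1 3) : ℤˣ) : ℤ) = 1 := by decide
  simp only [pos1, pos2, pos3, pos4, pos5, pos6, sign2, sign3, sign4, sign5, sign6]
  norm_num
  abel

end CircleFormulas

section Bracket

variable {M : Type*} [AddCommGroup M] (β : M → M)

theorem bracketL_two_two (f g : (Fin 2 → M) → M) (N : ℕ) :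
    bracketL β f g N = circL β f g N + circL β g f N := by
  funext a
  simp [bracketL, sub_eq_add_neg]

theorem bracketL_comm_two_two (f g : (Fin 2 → M) → M) (N : ℕ) :
    bracketL β f g N = bracketL β g f N := by
  rw [bracketL_two_two, bracketL_two_two, add_comm]

theorem bracketL_two_three (f : (Fin 2 → M) → M) (T : (Fin 3 → M) → M) (N : ℕ) :
    bracketL β f T N = circL β f T N - circL β T f N := by
  funext a
  simp [bracketL]

theorem circL_add_left {m n : ℕ} (f₁ f₂ : (Fin m → M) → M) (g : (Fin n → M) → M) (N : ℕ) :
    circL β (f₁ + f₂) g N = circL β f₁ g N + circL β f₂ g N := by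
  funext a
  simp only [circL, Pi.add_apply]
  split_ifs <;> simp [smul_add, sum_add_distrib]

theorem circL_sum_left {ι : Type*} (s : Finset ι) {m n : ℕ} (f : ι → (Fin m → M) → M)
    (g : (Fin n → M) → M) (N : ℕ) :
    circL β (∑ i ∈ s, f i) g N = ∑ i ∈ s, circL β (f i) g N := by
  funext a
  simp only [circL, Finset.sum_apply]
  split_ifs
  · simp only [Finset.smul_sum]
    exact Finset.sum_comm
  · simp

theorem circL_zero_left {m n : ℕ} (g : (Fin n → M) → M) (N : ℕ) :
    circL β (0 : (Fin m → M) → M) g N = 0 := by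
  simpa using circL_sum_left β (∅ : Finset ℕ) (fun _ => (0 : (Fin m → M) → M)) g N

end Bracket

theorem isBetaCochain_fn2_iff {M : Type*} (β : M → M) (f : M → M → M) :
    IsBetaCochain β (fn2 f) ↔ ∀ x y, β (f x y) = f (β x) (β y) :=
  ⟨fun h x y => h ![x, y], fun h a => h (a 0) (a 1)⟩

section Bilinear

variable {K : Type*} [CommRing K] {M : Type*} [AddCommGroup M] [Module K M] (β : M → M)

theorem circL_fn2_add_right (f : M →ₗ[K] M →ₗ[K] M) (T₁ T₂ : (Fin 3 → M) → M) :
    circL β (fn2 fun x y => f x y) (T₁ + T₂) 4 =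
      circL β (fn2 fun x y => f x y) T₁ 4 + circL β (fn2 fun x y => f x y) T₂ 4 := by
  simp only [circL_fn2_ternary]
  funext a
  simp only [Pi.add_apply, map_add, LinearMap.add_apply]
  abel

theorem circL_fn2_sum_right {ι : Type*} (s : Finset ι) (f : M →ₗ[K] M →ₗ[K] M)
    (T : ι → (Fin 3 → M) → M) :
    circL β (fn2 fun x y => f x y) (∑ i ∈ s, T i) 4 =
      ∑ i ∈ s, circL β (fn2 fun x y => f x y) (T i) 4 := by
  simp only [circL_fn2_ternary]
  funext a
  simp only [Finset.sum_apply, map_sum, LinearMap.sum_apply, ← sum_add_distrib,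
    ← sum_sub_distrib]

theorem circL_fn2_zero_right (f : M →ₗ[K] M →ₗ[K] M) :
    circL β (fn2 fun x y => f x y) (0 : (Fin 3 → M) → M) 4 = 0 := by
  simpa using circL_fn2_sum_right β (∅ : Finset ℕ) f fun _ => 0

theorem bracketL_fn2_zero_right (f : M →ₗ[K] M →ₗ[K] M) :
    bracketL β (fn2 fun x y => f x y) (fn2 fun x y => (0 : M →ₗ[K] M →ₗ[K] M) x y) 3 = 0 := by
  rw [bracketL_two_two, circL_fn2_fn2, circL_fn2_fn2]
  funext a
  simp

theorem bracketL_fn2_smul_right (f g : M →ₗ[K] M →ₗ[K] M) (c : K) :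
    bracketL β (fn2 fun x y => f x y) (fn2 fun x y => (c • g) x y) 3 =
      c • bracketL β (fn2 fun x y => f x y) (fn2 fun x y => g x y) 3 := by
  rw [bracketL_two_two, bracketL_two_two, circL_fn2_fn2, circL_fn2_fn2, circL_fn2_fn2,
    circL_fn2_fn2]
  funext a
  simp only [LinearMap.smul_apply, map_smul, Pi.add_apply, Pi.smul_apply, smul_add, smul_sub]

theorem circL_preLie (f : M →ₗ[K] M →ₗ[K] M) {g h : M → M → M}
    (hg : IsBetaCochain β (fn2 g)) (hh : IsBetaCochain β (fn2 h)) :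
    circL β (circL β (fn2 fun x y => f x y) (fn2 g) 3) (fn2 h) 4 +
        circL β (circL β (fn2 fun x y => f x y) (fn2 h) 3) (fn2 g) 4 =
      circL β (fn2 fun x y => f x y) (circL β (fn2 g) (fn2 h) 3) 4 +
        circL β (fn2 fun x y => f x y) (circL β (fn2 h) (fn2 g) 3) 4 := by
  rw [isBetaCochain_fn2_iff] at hg hh
  simp only [circL_fn2_fn2, circL_ternary_fn2, circL_fn2_ternary]
  funext a
  simp only [Pi.add_apply, Matrix.cons_val_zero, Matrix.cons_val_one, Matrix.cons_val_two,
    Matrix.tail_cons, Matrix.head_cons, map_add, map_sub, LinearMap.add_apply,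
    LinearMap.sub_apply, hg, hh]
  abel

end Bilinear

section Antidiagonal

open Finset.Nat

variable {N : Type*} [AddCommMonoid N]

theorem sum_antidiagonal_antidiagonal_assoc (F : ℕ → ℕ → ℕ → N) (n : ℕ) :
    ∑ x ∈ antidiagonal n, ∑ y ∈ antidiagonal x.1, F y.1 y.2 x.2 =
      ∑ x ∈ antidiagonal n, ∑ y ∈ antidiagonal x.2, F x.1 y.1 y.2 := by
  simp only [Finset.sum_sigma']
  apply Finset.sum_nbij' (fun u => ⟨(u.2.1, u.2.2 + u.1.2), (u.2.2, u.1.2)⟩)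
    (fun u => ⟨(u.1.1 + u.2.1, u.2.2), (u.1.1, u.2.1)⟩) <;>
    aesop (add simp [add_assoc])

theorem sum_antidiagonal_antidiagonal_of_preLie (F G : ℕ → ℕ → ℕ → N) (n : ℕ)
    (h : ∀ p q r, p + q + r = n → F p q r + F p r q = G p q r + G p r q) :
    ∑ x ∈ antidiagonal n, ∑ y ∈ antidiagonal x.1, (F y.1 y.2 x.2 + F y.2 y.1 x.2) =
      ∑ x ∈ antidiagonal n, ∑ y ∈ antidiagonal x.2, (G x.1 y.1 y.2 + G x.1 y.2 y.1) := by
  have swap_fst : ∑ x ∈ antidiagonal n, ∑ y ∈ antidiagonal x.1, F y.2 y.1 x.2 =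
      ∑ x ∈ antidiagonal n, ∑ y ∈ antidiagonal x.1, F y.1 y.2 x.2 :=
    sum_congr rfl fun x _ => sum_antidiagonal_swap (f := fun y => F y.1 y.2 x.2)
  have swap_snd : ∑ x ∈ antidiagonal n, ∑ y ∈ antidiagonal x.2, F x.1 y.2 y.1 =
      ∑ x ∈ antidiagonal n, ∑ y ∈ antidiagonal x.2, F x.1 y.1 y.2 :=
    sum_congr rfl fun x _ => sum_antidiagonal_swap (f := fun y => F x.1 y.1 y.2)
  calc _ = ∑ x ∈ antidiagonal n, ∑ y ∈ antidiagonal x.2, F x.1 y.1 y.2 +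
        ∑ x ∈ antidiagonal n, ∑ y ∈ antidiagonal x.2, F x.1 y.2 y.1 := by
        rw [swap_snd, ← sum_antidiagonal_antidiagonal_assoc, ← swap_fst, ← sum_add_distrib]
        simp only [sum_add_distrib, swap_fst]
    _ = _ := by
        rw [← sum_add_distrib]
        refine sum_congr rfl fun x hx => ?_
        rw [← sum_add_distrib]
        refine sum_congr rfl fun y hy => h _ _ _ ?_
        rw [HasAntidiagonal.mem_antidiagonal] at hx hy
        omega

end Antidiagonal

section Deformation

open Finset.Nat

variable {K : Type*} [CommRing K] {M : Type*} [AddCommGroup M] [Module K M] (β : M → M)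

/-- The coefficient of `tˢ` in `[e_t, e_t]_l` for the formal series `e_t = ∑ eᵢ tⁱ`. -/
noncomputable def bracketCoeff (e : ℕ → M →ₗ[K] M →ₗ[K] M) (s : ℕ) : (Fin 3 → M) → M :=
  ∑ i ∈ range (s + 1), bracketL β (fn2 fun x y => e i x y) (fn2 fun x y => e (s - i) x y) 3

theorem bracketCoeff_congr {e e' : ℕ → M →ₗ[K] M →ₗ[K] M} {s : ℕ} (h : ∀ i ≤ s, e i = e' i) :
    bracketCoeff β e s = bracketCoeff β e' s :=
  sum_congr rfl fun i hi => by
    rw [mem_range] at hi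
    rw [h i (by omega), h (s - i) (by omega)]

theorem bracketCoeff_eq_sum_antidiagonal (e : ℕ → M →ₗ[K] M →ₗ[K] M) (s : ℕ) :
    bracketCoeff β e s = ∑ x ∈ antidiagonal s,
      (circL β (fn2 fun a b => e x.1 a b) (fn2 fun a b => e x.2 a b) 3 +
        circL β (fn2 fun a b => e x.2 a b) (fn2 fun a b => e x.1 a b) 3) := by
  rw [bracketCoeff, ← sum_antidiagonal_eq_sum_range_succ
    (fun i j => bracketL β (fn2 fun x y => e i x y) (fn2 fun x y => e j x y) 3)]
  simp only [bracketL_two_two]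

theorem bracketCoeff_eq_two_nsmul (e : ℕ → M →ₗ[K] M →ₗ[K] M) (s : ℕ) :
    bracketCoeff β e s = 2 • ∑ x ∈ antidiagonal s,
      circL β (fn2 fun a b => e x.1 a b) (fn2 fun a b => e x.2 a b) 3 := by
  rw [bracketCoeff_eq_sum_antidiagonal, sum_add_distrib, two_nsmul,
    sum_antidiagonal_swap (f := fun x =>
      circL β (fn2 fun a b => e x.1 a b) (fn2 fun a b => e x.2 a b) 3).symm]
  rfl

theorem bracketL_bracketCoeff_eq_zero (e : ℕ → M →ₗ[K] M →ₗ[K] M) (n : ℕ)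
    (he : ∀ i ≤ n, IsBetaCochain β (fn2 fun x y => e i x y))
    (hlow : ∀ s < n, bracketCoeff β e s = 0) :
    bracketL β (fn2 fun x y => e 0 x y) (bracketCoeff β e n) 4 = 0 := by
  rw [bracketL_two_three, sub_eq_zero]
  have hL : circL β (fn2 fun x y => e 0 x y) (bracketCoeff β e n) 4 = ∑ x ∈ antidiagonal n,
      circL β (fn2 fun a b => e x.1 a b) (bracketCoeff β e x.2) 4 := by
    rw [sum_eq_single_of_mem (0, n) (HasAntidiagonal.mem_antidiagonal.2 (zero_add n))]
    intro x hx hne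
    rw [HasAntidiagonal.mem_antidiagonal] at hx
    rw [hlow x.2 (by grind), circL_fn2_zero_right]
  have hR : circL β (bracketCoeff β e n) (fn2 fun x y => e 0 x y) 4 = ∑ x ∈ antidiagonal n,
      circL β (bracketCoeff β e x.1) (fn2 fun a b => e x.2 a b) 4 := by
    rw [sum_eq_single_of_mem (n, 0) (HasAntidiagonal.mem_antidiagonal.2 (add_zero n))]
    intro x hx hne
    rw [HasAntidiagonal.mem_antidiagonal] at hx
    rw [hlow x.1 (by grind), circL_zero_left]
  rw [hL, hR]
  simp only [bracketCoeff_eq_sum_antidiagonal, circL_fn2_sum_right, circL_fn2_add_right,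
    circL_sum_left, circL_add_left]
  exact (sum_antidiagonal_antidiagonal_of_preLie _ _ n fun p q r hpqr =>
    circL_preLie β (e p) (he q (by omega)) (he r (by omega))).symm

theorem bracketCoeff_update_self (e : ℕ → M →ₗ[K] M →ₗ[K] M) (d : M →ₗ[K] M →ₗ[K] M) {n : ℕ}
    (hn : n ≠ 0) :
    bracketCoeff β (Function.update e n d) n =
      2 • bracketL β (fn2 fun x y => e 0 x y) (fn2 fun x y => d x y) 3 +
        ∑ i ∈ Ico 1 n, bracketL β (fn2 fun x y => e i x y) (fn2 fun x y => e (n - i) x y) 3 := by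
  rw [bracketCoeff, sum_range_succ, sum_range_eq_add_Ico _ (Nat.pos_of_ne_zero hn),
    Nat.sub_zero, Nat.sub_self, Function.update_self, Function.update_of_ne (Ne.symm hn),
    bracketL_comm_two_two β _ (fn2 fun x y => e 0 x y), two_nsmul, add_right_comm]
  congr 1
  refine sum_congr rfl fun i hi => ?_
  rw [mem_Ico] at hi
  rw [Function.update_of_ne (by omega), Function.update_of_ne (by omega)]

end Deformation

section LinearTwist

variable {K : Type*} [CommRing K] {M : Type*} [AddCommGroup M] [Module K M] (β : M →ₗ[K] M)

theorem isBetaCochain_fn2_zero : IsBetaCochain β (fn2 fun x y => (0 : M →ₗ[K] M →ₗ[K] M) x y) :=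
  fun a => by simp [fn2]

theorem isBetaCochain_fn2_smul {g : M →ₗ[K] M →ₗ[K] M} (c : K)
    (hg : IsBetaCochain β (fn2 fun x y => g x y)) :
    IsBetaCochain β (fn2 fun x y => (c • g) x y) := by
  rw [isBetaCochain_fn2_iff] at hg ⊢
  intro x y
  simp only [LinearMap.smul_apply, map_smul, hg]

end LinearTwist

section Field

variable {K : Type*} [Field K] {M : Type*} [AddCommGroup M] [Module K M] (β : M →ₗ[K] M)

theorem exists_two_nsmul_bracketL_add_eq_zero_iff (d₀ : M →ₗ[K] M →ₗ[K] M)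
    {Ψ Φ : (Fin 3 → M) → M} (hΨ : Ψ = 2 • Φ) :
    (∃ d : M →ₗ[K] M →ₗ[K] M, IsBetaCochain β (fn2 fun x y => d x y) ∧
        2 • bracketL β (fn2 fun x y => d₀ x y) (fn2 fun x y => d x y) 3 + Ψ = 0) ↔
      ∃ g : M →ₗ[K] M →ₗ[K] M, IsBetaCochain β (fn2 fun x y => g x y) ∧
        Ψ = bracketL β (fn2 fun x y => d₀ x y) (fn2 fun x y => g x y) 3 := by
  constructor
  · rintro ⟨d, hd, hsum⟩
    refine ⟨(-2 : K) • d, isBetaCochain_fn2_smul β _ hd, ?_⟩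
    rw [bracketL_fn2_smul_right, eq_neg_of_add_eq_zero_right hsum, neg_smul, two_smul K,
      two_nsmul]
  · rintro ⟨g, hg, rfl⟩
    -- In characteristic 2 this witness is `0` (as `2⁻¹ = 0`), and then `Ψ = 2 • Φ` vanishes.
    refine ⟨(-(2 : K)⁻¹) • g, isBetaCochain_fn2_smul β _ hg, ?_⟩
    rw [bracketL_fn2_smul_right, two_nsmul, ← two_smul K, smul_smul, mul_neg]
    rcases eq_or_ne (2 : K) 0 with h2 | h2
    · rw [h2, zero_mul, neg_zero, zero_smul, zero_add, hΨ, two_nsmul, ← two_smul K, h2,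
        zero_smul]
    · rw [mul_inv_cancel₀ h2, neg_one_smul, neg_add_cancel]

end Field

theorem statement_13_general {K : Type*} [Field K] {M : Type*} [AddCommGroup M] [Module K M]
    (β : M →ₗ[K] M) (ds : ℕ → (M →ₗ[K] M →ₗ[K] M)) {k : ℕ} (hk : 2 ≤ k)
    (hcoch : ∀ i < k, IsBetaCochain (⇑β) (fn2 (fun x y => ds i x y)))
    (hdef : ∀ s < k, ∑ i ∈ Finset.range (s + 1),
      bracketL (⇑β) (fn2 (fun x y => ds i x y)) (fn2 (fun x y => ds (s - i) x y)) 3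
        = 0) :
    (bracketL (⇑β) (fn2 (fun x y => ds 0 x y))
        (∑ i ∈ Finset.Ico 1 k,
          bracketL (⇑β) (fn2 (fun x y => ds i x y))
            (fn2 (fun x y => ds (k - i) x y)) 3) 4 = 0) ∧
    ((∃ dk : M →ₗ[K] M →ₗ[K] M, IsBetaCochain (⇑β) (fn2 (fun x y => dk x y)) ∧
        ∑ i ∈ Finset.range (k + 1),
          bracketL (⇑β) (fn2 (fun x y => Function.update ds k dk i x y))
            (fn2 (fun x y => Function.update ds k dk (k - i) x y)) 3 = 0) ↔
      (∃ g : M →ₗ[K] M →ₗ[K] M, IsBetaCochain (⇑β) (fn2 (fun x y => g x y)) ∧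
        ∑ i ∈ Finset.Ico 1 k,
          bracketL (⇑β) (fn2 (fun x y => ds i x y))
            (fn2 (fun x y => ds (k - i) x y)) 3
          = bracketL (⇑β) (fn2 (fun x y => ds 0 x y)) (fn2 (fun x y => g x y)) 3)) := by
  have hk0 : k ≠ 0 := by omega
  have hΨ : ∑ i ∈ Finset.Ico 1 k,
      bracketL (⇑β) (fn2 fun x y => ds i x y) (fn2 fun x y => ds (k - i) x y) 3 =
        bracketCoeff β (Function.update ds k 0) k := by
    rw [bracketCoeff_update_self _ _ _ hk0, bracketL_fn2_zero_right, smul_zero, zero_add]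
  have hcoch_trunc : ∀ i ≤ k, IsBetaCochain β (fn2 fun x y => Function.update ds k 0 i x y) := by
    intro i hi
    rcases hi.lt_or_eq with hi | rfl
    · rw [Function.update_of_ne hi.ne]
      exact hcoch i hi
    · rw [Function.update_self]
      exact isBetaCochain_fn2_zero β
  have hdef_trunc : ∀ s < k, bracketCoeff β (Function.update ds k 0) s = 0 := fun s hs => by
    rw [bracketCoeff_congr β (e' := ds) fun i hi => Function.update_of_ne (by omega) _ _]
    exact hdef s hs
  refine ⟨?_, ?_⟩
  · have h := bracketL_bracketCoeff_eq_zero β _ k hcoch_trunc hdef_trunc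
    rwa [Function.update_of_ne (Ne.symm hk0), ← hΨ] at h
  · simp only [← bracketCoeff.eq_1, bracketCoeff_update_self β ds _ hk0]
    exact exists_two_nsmul_bracketL_add_eq_zero_iff β (ds 0)
      (hΨ.trans (bracketCoeff_eq_two_nsmul β _ k))

/-- for a deformation of order `k-1` of a left Hom-Leibniz algebra, the
obstruction `Ψ = Σ_{i=1}^{k-1} [dᵢ, d_{k-i}]_l` is a 3-cocycle, and the deformation
extends to order `k` if and only if `Ψ` is a 3-coboundary. -/
theorem statement_13 {K : Type*} [Field K] {M : Type*} [AddCommGroup M] [Module K M]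
    (β : M →ₗ[K] M) (ds : ℕ → (M →ₗ[K] M →ₗ[K] M)) {k : ℕ} (hk : 2 ≤ k)
    (hcoch : ∀ i < k, IsBetaCochain (⇑β) (fn2 (fun x y => ds i x y)))
    (hLeib : IsLeftHomLeibniz (⇑β) (fun x y => ds 0 x y))
    (hdef : ∀ s < k, ∑ i ∈ Finset.range (s + 1),
      bracketL (⇑β) (fn2 (fun x y => ds i x y)) (fn2 (fun x y => ds (s - i) x y)) 3
        = 0) :
    (bracketL (⇑β) (fn2 (fun x y => ds 0 x y))
        (∑ i ∈ Finset.Ico 1 k,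
          bracketL (⇑β) (fn2 (fun x y => ds i x y))
            (fn2 (fun x y => ds (k - i) x y)) 3) 4 = 0) ∧
    ((∃ dk : M →ₗ[K] M →ₗ[K] M, IsBetaCochain (⇑β) (fn2 (fun x y => dk x y)) ∧
        ∑ i ∈ Finset.range (k + 1),
          bracketL (⇑β) (fn2 (fun x y => Function.update ds k dk i x y))
            (fn2 (fun x y => Function.update ds k dk (k - i) x y)) 3 = 0) ↔
      (∃ g : M →ₗ[K] M →ₗ[K] M, IsBetaCochain (⇑β) (fn2 (fun x y => g x y)) ∧
        ∑ i ∈ Finset.Ico 1 k,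
          bracketL (⇑β) (fn2 (fun x y => ds i x y))
            (fn2 (fun x y => ds (k - i) x y)) 3
          = bracketL (⇑β) (fn2 (fun x y => ds 0 x y)) (fn2 (fun x y => g x y)) 3)) :=
  statement_13_general β ds hk hcoch hdef
end

section
/- Let (L ⊕ V, d, α + α_V) be an extension of the Hom-algebra (L,δ,α) by the abelian Hom-algebra (V, 0, α_V), where d = δ + λ_r + λ_l + θ (so μ = 0). Let h : L → V be a linear map with h ∘ α = α_V ∘ h, and set d' = d + [d,h]_l, so that d'(x+v, y+w) = δ(x,y) + λ_r(v,y) + λ_l(x,w) + θ(x,y) + λ_r(h(x),y) + λ_l(x,h(y)) − h(δ(x,y)). Then the linear map Φ : L ⊕ V → L ⊕ V defined by Φ(x+v) = x + h(x) + v is an isomorphism of Hom-algebras from (L⊕V, d', α+α_V) to (L⊕V, d, α+α_V) satisfying Φ(d'(x+v, y+w)) = d(Φ(x+v), Φ(y+w)), Φ ∘ i_0 = i_0, and π_0 ∘ Φ = π_0 (with i_0(v) = v, π_0(x+v) = x); hence the two extensions are equivalent. -/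
open Finset

section ExtPreamble

variable {K : Type*} [Field K] {L V : Type*} [AddCommGroup L] [Module K L]
  [AddCommGroup V] [Module K V]

/-- The twisting map `α + α_V` on `L ⊕ V`. -/
def extBeta (α : L →ₗ[K] L) (αV : V →ₗ[K] V) : L × V → L × V := fun p => (α p.1, αV p.2)

/-- `δ` viewed as a binary map on `L ⊕ V`. -/
def liftD (δ : L →ₗ[K] L →ₗ[K] L) : L × V → L × V → L × V := fun p q => (δ p.1 q.1, 0)

/-- `λ = λ_l + λ_r` viewed as a binary map on `L ⊕ V`. -/
def liftLam (lamL : L →ₗ[K] V →ₗ[K] V) (lamR : V →ₗ[K] L →ₗ[K] V) :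
    L × V → L × V → L × V := fun p q => (0, lamL p.1 q.2 + lamR p.2 q.1)

/-- `μ` viewed as a binary map on `L ⊕ V`. -/
def liftMu (μ : V →ₗ[K] V →ₗ[K] V) : L × V → L × V → L × V := fun p q => (0, μ p.2 q.2)

/-- `θ` viewed as a binary map on `L ⊕ V`. -/
def liftTheta (θ : L →ₗ[K] L →ₗ[K] V) : L × V → L × V → L × V := fun p q => (0, θ p.1 q.1)

/-- The binary map `d = δ + λ_l + λ_r + μ + θ` on `L ⊕ V`. -/
def dSum (δ : L →ₗ[K] L →ₗ[K] L) (μ : V →ₗ[K] V →ₗ[K] V)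
    (lamL : L →ₗ[K] V →ₗ[K] V) (lamR : V →ₗ[K] L →ₗ[K] V)
    (θ : L →ₗ[K] L →ₗ[K] V) : L × V → L × V → L × V :=
  fun p q => (δ p.1 q.1, θ p.1 q.1 + lamL p.1 q.2 + lamR p.2 q.1 + μ p.2 q.2)

end ExtPreamble

/-! The circle products in `[d, h]_l` run over the two `(1,1)`-unshuffles and the identity
`(2,0)`-unshuffle of `Fin 2`, so `[d, h]_l (x, y) = d (h x) y + d x (h y) - h (d x y)`.
Since `μ = 0`, pushing `d'` forward along the shear `Φ (x, v) = (x, h x + v)` adds exactly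
`λ_r (h x) y + λ_l x (h y)` to the `V`-component of `d`, and the term `- h (δ x y)` of `d'`
is cancelled by the `h`-part of `Φ`. -/

section BracketOfBinaryAndUnary

variable {M : Type*} [AddCommGroup M]

lemma unshuffles_two_one :
    univ.filter (IsUnshuffle (N := 2) 1) = {1, Equiv.swap 0 1} := by decide

lemma unshuffles_two_two : univ.filter (IsUnshuffle (N := 2) 2) = {1} := by decide

lemma circL_fn2_unary (β : M → M) (d : M → M → M) (g : (Fin 1 → M) → M) (a : Fin 2 → M) :
    circL β (fn2 d) g 2 a = d (g fun _ => a 0) (a 1) + d (a 0) (g fun _ => a 1) := by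
  have hdeg : 2 + 1 = 2 + 1 ∧ 1 ≤ 2 ∧ 1 ≤ 1 := by omega
  have hpos_one : ((insPosL hdeg (1 : Equiv.Perm (Fin 2)) : Fin 2) : ℕ) = 0 := rfl
  have hpos_swap : ((insPosL hdeg (Equiv.swap 0 1 : Equiv.Perm (Fin 2)) : Fin 2) : ℕ) = 1 := rfl
  rw [circL, dif_pos hdeg, unshuffles_two_one, sum_insert (by decide), sum_singleton]
  simp [hpos_one, hpos_swap, fn2]

lemma circL_unary_fn2 (β : M → M) (d : M → M → M) (g : (Fin 1 → M) → M) (a : Fin 2 → M) :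
    circL β g (fn2 d) 2 a = g fun _ => d (a 0) (a 1) := by
  have hdeg : 1 + 2 = 2 + 1 ∧ 1 ≤ 1 ∧ 1 ≤ 2 := by omega
  rw [circL, dif_pos hdeg, unshuffles_two_two, sum_singleton]
  simp [fn2]

lemma bracketL_fn2_unary (β : M → M) (d : M → M → M) (g : (Fin 1 → M) → M) (a : Fin 2 → M) :
    bracketL β (fn2 d) g 2 a
      = d (g fun _ => a 0) (a 1) + d (a 0) (g fun _ => a 1) - g fun _ => d (a 0) (a 1) := by
  rw [bracketL, circL_fn2_unary, circL_unary_fn2, show (2 - 1) * (1 - 1) = 0 from rfl,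
    pow_zero, one_smul]

end BracketOfBinaryAndUnary

section ShiftedExtension

variable {K : Type*} [Field K] {L V : Type*} [AddCommGroup L] [Module K L]
  [AddCommGroup V] [Module K V]

/-- The multiplication `d' = d + [d, h]_l` of the shifted abelian extension. -/
def shiftedDSum (δ : L →ₗ[K] L →ₗ[K] L) (lamL : L →ₗ[K] V →ₗ[K] V)
    (lamR : V →ₗ[K] L →ₗ[K] V) (θ : L →ₗ[K] L →ₗ[K] V) (h : L →ₗ[K] V) :
    L × V → L × V → L × V :=
  fun p q => (δ p.1 q.1, θ p.1 q.1 + lamL p.1 q.2 + lamR p.2 q.1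
    + (lamR (h p.1) q.1 + lamL p.1 (h q.1) - h (δ p.1 q.1)))

lemma fn2_shiftedDSum (α : L →ₗ[K] L) (αV : V →ₗ[K] V) (δ : L →ₗ[K] L →ₗ[K] L)
    (lamL : L →ₗ[K] V →ₗ[K] V) (lamR : V →ₗ[K] L →ₗ[K] V) (θ : L →ₗ[K] L →ₗ[K] V)
    (h : L →ₗ[K] V) :
    fn2 (shiftedDSum δ lamL lamR θ h)
      = fn2 (dSum δ 0 lamL lamR θ)
        + bracketL (extBeta α αV) (fn2 (dSum δ 0 lamL lamR θ))
            (fun a : Fin 1 → L × V => ((0 : L), h (a 0).1)) 2 := by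
  funext a
  rw [Pi.add_apply, bracketL_fn2_unary]
  ext <;> simp [fn2, shiftedDSum, dSum]

def shear (h : L →ₗ[K] V) : (L × V) ≃ₗ[K] (L × V) :=
  (LinearEquiv.refl K L).skewProd (LinearEquiv.refl K V) h

lemma shear_apply (h : L →ₗ[K] V) (p : L × V) : shear h p = (p.1, h p.1 + p.2) := by
  simp [shear, LinearEquiv.skewProd_apply, add_comm]

lemma shear_extBeta {α : L →ₗ[K] L} {αV : V →ₗ[K] V} {h : L →ₗ[K] V}
    (hh : ∀ x : L, h (α x) = αV (h x)) (p : L × V) :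
    shear h (extBeta α αV p) = extBeta α αV (shear h p) := by
  simp [shear_apply, extBeta, hh]

lemma shear_shiftedDSum (δ : L →ₗ[K] L →ₗ[K] L) (lamL : L →ₗ[K] V →ₗ[K] V)
    (lamR : V →ₗ[K] L →ₗ[K] V) (θ : L →ₗ[K] L →ₗ[K] V) (h : L →ₗ[K] V) (p q : L × V) :
    shear h (shiftedDSum δ lamL lamR θ h p q) = dSum δ 0 lamL lamR θ (shear h p) (shear h q) := by
  simp only [shear_apply, shiftedDSum, dSum, map_add, LinearMap.add_apply, LinearMap.zero_apply,
    add_zero, Prod.mk.injEq, true_and]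
  abel

lemma shear_zero_fst (h : L →ₗ[K] V) (v : V) : shear h ((0 : L), v) = ((0 : L), v) := by
  simp [shear_apply]

lemma shear_fst (h : L →ₗ[K] V) (p : L × V) : (shear h p).1 = p.1 := by
  simp [shear_apply]

end ShiftedExtension

/-- shifting an abelian extension by a 1-Hom-cochain `h` (i.e. replacing
`d` by `d' = d + [d,h]_l`) yields an equivalent extension, via the isomorphism
`Φ(x+v) = x + h(x) + v`. -/
theorem statement_17 {K : Type*} [Field K] {L V : Type*}
    [AddCommGroup L] [Module K L] [AddCommGroup V] [Module K V]
    (α : L →ₗ[K] L) (αV : V →ₗ[K] V)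
    (δ : L →ₗ[K] L →ₗ[K] L) (lamL : L →ₗ[K] V →ₗ[K] V) (lamR : V →ₗ[K] L →ₗ[K] V)
    (θ : L →ₗ[K] L →ₗ[K] V) (h : L →ₗ[K] V) (hh : ∀ x : L, h (α x) = αV (h x)) :
    (fn2 (fun p q : L × V =>
        ((δ p.1 q.1, θ p.1 q.1 + lamL p.1 q.2 + lamR p.2 q.1
          + (lamR (h p.1) q.1 + lamL p.1 (h q.1) - h (δ p.1 q.1))) : L × V))
      = fn2 (dSum δ 0 lamL lamR θ)
        + bracketL (extBeta α αV) (fn2 (dSum δ 0 lamL lamR θ))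
            (fun a : Fin 1 → L × V => (((0 : L), h (a 0).1) : L × V)) 2) ∧
    (∃ Φ : (L × V) ≃ₗ[K] (L × V),
      (∀ p : L × V, Φ p = (p.1, h p.1 + p.2)) ∧
      (∀ p : L × V, Φ (extBeta α αV p) = extBeta α αV (Φ p)) ∧
      (∀ p q : L × V,
        Φ ((δ p.1 q.1, θ p.1 q.1 + lamL p.1 q.2 + lamR p.2 q.1
            + (lamR (h p.1) q.1 + lamL p.1 (h q.1) - h (δ p.1 q.1))) : L × V)
          = dSum δ 0 lamL lamR θ (Φ p) (Φ q)) ∧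
      (∀ v : V, Φ ((0 : L), v) = ((0 : L), v)) ∧
      (∀ p : L × V, (Φ p).1 = p.1)) :=
  ⟨fn2_shiftedDSum α αV δ lamL lamR θ h, shear h, shear_apply h, shear_extBeta hh,
    shear_shiftedDSum δ lamL lamR θ h, shear_zero_fst h, shear_fst h⟩
end
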